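/- Under the stated setting, suppose conditions (i)–(iii) of the approximation theorem hold at a point x₀ ∈ argmin φ (so argmin φ is nonempty). Then limsup_ν (inf f^ν) ≤ inf f, where inf f = inf φ. -/

import Mathlib

open MeasureTheory Filter Topology Metric Set Pointwise

noncomputable section



/-- Euclidean (ℓ²) norm on `Fin m → ℝ`. -/
def en2 {m : ℕ} (u : Fin m → ℝ) : ℝ := Real.sqrt (∑ i, u i ^ 2)

lemma en2_nonneg {m : ℕ} (u : Fin m → ℝ) : 0 ≤ en2 u := Real.sqrt_nonneg _

lemma abs_le_en2 {m : ℕ} (u : Fin m → ℝ) (i : Fin m) : |u i| ≤ en2 u := by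
  rw [← Real.sqrt_sq_eq_abs]
  exact Real.sqrt_le_sqrt (Finset.single_le_sum (fun j _ => sq_nonneg (u j)) (Finset.mem_univ i))

lemma en2_smul {m : ℕ} (c : ℝ) (hc : 0 ≤ c) (u : Fin m → ℝ) :
    en2 (fun i => c * u i) = c * en2 u := by
  unfold en2
  have hs : ∑ i, (c * u i) ^ 2 = c ^ 2 * ∑ i, u i ^ 2 := by
    rw [Finset.mul_sum]; exact Finset.sum_congr rfl fun i _ => by ring
  rw [hs, Real.sqrt_mul (sq_nonneg c), Real.sqrt_sq hc]

lemma en2_neg {m : ℕ} (u : Fin m → ℝ) : en2 (fun i => -u i) = en2 u := by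
  unfold en2; congr 1; exact Finset.sum_congr rfl fun i _ => by ring

lemma continuous_en2 {m : ℕ} : Continuous (en2 : (Fin m → ℝ) → ℝ) :=
  Real.continuous_sqrt.comp (continuous_finset_sum _ fun i _ => (continuous_apply i).pow 2)

lemma en2_zero {m : ℕ} : en2 (0 : Fin m → ℝ) = 0 := by simp [en2]


/-- Componentwise expectation of a vector-valued integrand. -/
def EV {d n m : ℕ} (μ : Measure (EuclideanSpace ℝ (Fin d)))
    (G : EuclideanSpace ℝ (Fin d) → EuclideanSpace ℝ (Fin n) → Fin m → ℝ)
    (x : EuclideanSpace ℝ (Fin n)) : Fin m → ℝ :=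
  fun i => ∫ ξ, G ξ x i ∂μ

/-- The actual objective `φ`. -/
def phiFun {d n m : ℕ} (g0 : EuclideanSpace ℝ (Fin n) → EReal)
    (h : (Fin m → ℝ) → EReal) (μ : Measure (EuclideanSpace ℝ (Fin d)))
    (G : EuclideanSpace ℝ (Fin d) → EuclideanSpace ℝ (Fin n) → Fin m → ℝ) :
    EuclideanSpace ℝ (Fin n) → EReal :=
  fun x => g0 x + h (EV μ G x)

/-- The Rockafellian `f`. -/
def rock {d n m : ℕ} (g0 : EuclideanSpace ℝ (Fin n) → EReal)
    (h : (Fin m → ℝ) → EReal) (μ : Measure (EuclideanSpace ℝ (Fin d)))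
    (G : EuclideanSpace ℝ (Fin d) → EuclideanSpace ℝ (Fin n) → Fin m → ℝ) :
    (Fin m → ℝ) × EuclideanSpace ℝ (Fin n) → EReal :=
  fun p => g0 p.2 + h (p.1 + EV μ G p.2) + (if p.1 = 0 then (0 : EReal) else ⊤)

/-- The approximating Rockafellian with distribution `μ'`, mapping `G'`, parameters `α`, `lam`. -/
def rockApprox {d n m : ℕ} (g0 : EuclideanSpace ℝ (Fin n) → EReal)
    (h : (Fin m → ℝ) → EReal) (μ' : Measure (EuclideanSpace ℝ (Fin d)))
    (G' : EuclideanSpace ℝ (Fin d) → EuclideanSpace ℝ (Fin n) → Fin m → ℝ)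
    (α lam : ℝ) : (Fin m → ℝ) × EuclideanSpace ℝ (Fin n) → EReal :=
  fun p => g0 p.2 + h (p.1 + EV μ' G' p.2) + (((1 / (α * lam)) * en2 p.1 ^ α : ℝ) : EReal)


/-- Theorem 2.2(b): limsup (inf f^ν) ≤ inf f, with inf f = inf φ. -/
theorem limsup_inf_approx_le

    {d n m : ℕ}
    (Ξ : Set (EuclideanSpace ℝ (Fin d))) (hΞne : Ξ.Nonempty) (hΞcl : IsClosed Ξ)
    (μ : Measure (EuclideanSpace ℝ (Fin d))) [IsProbabilityMeasure μ] (hμΞ : μ Ξᶜ = 0)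
    (μs : ℕ → Measure (EuclideanSpace ℝ (Fin d))) [∀ ν, IsProbabilityMeasure (μs ν)]
    (hμsΞ : ∀ ν, μs ν Ξᶜ = 0)
    (g0 : EuclideanSpace ℝ (Fin n) → EReal)
    (hg0lsc : LowerSemicontinuous g0)
    (hg0bot : ∀ x, g0 x ≠ ⊥) (hg0top : ∃ x, g0 x ≠ ⊤)
    (h : (Fin m → ℝ) → EReal)
    (hhlsc : LowerSemicontinuous h)
    (hhbot : ∀ u, h u ≠ ⊥) (hhtop : ∃ u, h u ≠ ⊤)
    (hhmono : ∀ u v : Fin m → ℝ, (∀ i, u i ≤ v i) → h u ≤ h v)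
    (G : EuclideanSpace ℝ (Fin d) → EuclideanSpace ℝ (Fin n) → Fin m → ℝ)
    (Gs : ℕ → EuclideanSpace ℝ (Fin d) → EuclideanSpace ℝ (Fin n) → Fin m → ℝ)
    (hGmeas : ∀ i, Measurable fun p : EuclideanSpace ℝ (Fin d) × EuclideanSpace ℝ (Fin n) =>
      G p.1 p.2 i)
    (hGlsc : ∀ ξ i, LowerSemicontinuous fun x => G ξ x i)
    (hGsmeas : ∀ ν i, Measurable fun p : EuclideanSpace ℝ (Fin d) × EuclideanSpace ℝ (Fin n) =>
      Gs ν p.1 p.2 i)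
    (hGslsc : ∀ ν ξ i, LowerSemicontinuous fun x => Gs ν ξ x i)
    (hbd : ∀ x, ∃ ε > 0, ∃ M : ℝ, ∀ ξ ∈ Ξ, ∀ y ∈ closedBall x ε,
        en2 (G ξ y) ≤ M ∧ ∀ ν, en2 (Gs ν ξ y) ≤ M)
    (α : ℝ) (hα : 1 ≤ α)
    (lam : ℕ → ℝ) (hlam : ∀ ν, 0 < lam ν)

    (x0 : EuclideanSpace ℝ (Fin n))
    (hx0dom : phiFun g0 h μ G x0 ≠ ⊤)
    (hx0min : phiFun g0 h μ G x0 = ⨅ x, phiFun g0 h μ G x)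

    (hyp_i : ∀ ν, ∀ᵐ ξ ∂μ, ∀ i, Gs ν ξ x0 i ≤ G ξ x0 i)
    (hyp_ii : ∀ (x : EuclideanSpace ℝ (Fin n)) (xs : ℕ → EuclideanSpace ℝ (Fin n)),
        Tendsto xs atTop (𝓝 x) → ∀ i,
        EV μ G x i ≤ liminf (fun ν => EV (μs ν) (Gs ν) (xs ν) i) atTop)
    (hyp_iii₁ : Tendsto lam atTop (𝓝 0))
    (hyp_iii₂ : Tendsto
        (fun ν => fun i => lam ν ^ (-(1 / α)) * (EV (μs ν) (Gs ν) x0 i - EV μ (Gs ν) x0 i))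
        atTop (𝓝 0))
 :
    limsup (fun ν => ⨅ p, rockApprox g0 h (μs ν) (Gs ν) α (lam ν) p) atTop ≤
      ⨅ p, rock g0 h μ G p ∧
    (⨅ p, rock g0 h μ G p) = ⨅ x, phiFun g0 h μ G x := by
  classical
  have hphibot : ∀ x, phiFun g0 h μ G x ≠ ⊥ := fun x => by
    simp only [phiFun, ne_eq, EReal.add_eq_bot_iff]
    push_neg; exact ⟨hg0bot x, hhbot _⟩
  have goal2 : (⨅ p, rock g0 h μ G p) = ⨅ x, phiFun g0 h μ G x := by
    apply le_antisymm
    · refine le_iInf fun x => iInf_le_of_le ((0 : Fin m → ℝ), x) ?_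
      simp [rock, phiFun]
    · refine le_iInf fun p => ?_
      by_cases h0 : p.1 = 0
      · refine iInf_le_of_le p.2 ?_
        simp [rock, phiFun, h0]
      · have htop : rock g0 h μ G p = ⊤ := by
          simp only [rock, if_neg h0]
          exact EReal.add_top_of_ne_bot (by
            simp only [ne_eq, EReal.add_eq_bot_iff]; push_neg
            exact ⟨hg0bot _, hhbot _⟩)
        simp [htop]
  refine ⟨?_, goal2⟩
  have hαpos : (0:ℝ) < α := lt_of_lt_of_le one_pos hα
  obtain ⟨ε, hε, M, hM⟩ := hbd x0
  have hx0ball : x0 ∈ closedBall x0 ε := mem_closedBall_self hε.le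
  have haeΞ : ∀ᵐ ξ ∂μ, ξ ∈ Ξ := by
    rw [MeasureTheory.ae_iff]; exact hμΞ
  have measG : ∀ i, Measurable fun ξ => G ξ x0 i := fun i =>
    (hGmeas i).comp (measurable_id.prodMk measurable_const)
  have measGs : ∀ ν i, Measurable fun ξ => Gs ν ξ x0 i := fun ν i =>
    (hGsmeas ν i).comp (measurable_id.prodMk measurable_const)
  have intG : ∀ i, Integrable (fun ξ => G ξ x0 i) μ := fun i =>
    (integrable_const M).mono' (measG i).aestronglyMeasurable
      (haeΞ.mono fun ξ hξ => by
        rw [Real.norm_eq_abs]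
        exact le_trans (abs_le_en2 _ i) ((hM ξ hξ x0 hx0ball).1))
  have intGs : ∀ ν i, Integrable (fun ξ => Gs ν ξ x0 i) μ := fun ν i =>
    (integrable_const M).mono' (measGs ν i).aestronglyMeasurable
      (haeΞ.mono fun ξ hξ => by
        rw [Real.norm_eq_abs]
        exact le_trans (abs_le_en2 _ i) ((hM ξ hξ x0 hx0ball).2 ν))
  have hEVle : ∀ ν i, EV μ (Gs ν) x0 i ≤ EV μ G x0 i := fun ν i =>
    integral_mono_ae (intGs ν i) (intG i) ((hyp_i ν).mono fun ξ hξ => hξ i)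
  set u : ℕ → Fin m → ℝ := fun ν i => EV μ (Gs ν) x0 i - EV (μs ν) (Gs ν) x0 i with hu
  set c : ℕ → ℝ := fun ν => (1 / (α * lam ν)) * en2 (u ν) ^ α with hcdef
  -- the scaled deviation tends to 0
  have hw : Tendsto (fun ν => en2 (fun i =>
      lam ν ^ (-(1/α)) * (EV (μs ν) (Gs ν) x0 i - EV μ (Gs ν) x0 i))) atTop (𝓝 0) := by
    have := (continuous_en2.tendsto (0 : Fin m → ℝ)).comp hyp_iii₂
    simpa [en2_zero, Function.comp_def] using this
  have hs : Tendsto (fun ν => lam ν ^ (-(1/α)) * en2 (u ν)) atTop (𝓝 0) := by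
    refine hw.congr fun ν => ?_
    have h2 := en2_smul (lam ν ^ (-(1/α))) (Real.rpow_nonneg (hlam ν).le _) (fun i => -(u ν i))
    rw [en2_neg] at h2
    rw [← h2]
    congr 1; funext i; simp only [hu]; ring
  have hcs : ∀ ν, c ν = (1/α) * (lam ν ^ (-(1/α)) * en2 (u ν)) ^ α := by
    intro ν
    rw [Real.mul_rpow (Real.rpow_nonneg (hlam ν).le _) (en2_nonneg _)]
    have hαne : α ≠ 0 := hαpos.ne'
    have h1 : (lam ν ^ (-(1/α))) ^ α = (lam ν)⁻¹ := by
      rw [← Real.rpow_mul (hlam ν).le]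
      rw [show (-(1/α)) * α = -1 by field_simp]
      exact Real.rpow_neg_one _
    rw [h1]
    simp only [hcdef]
    field_simp
  have hc0 : Tendsto c atTop (𝓝 0) := by
    have h2 : Tendsto (fun ν => (1/α) * (lam ν ^ (-(1/α)) * en2 (u ν)) ^ α) atTop
        (𝓝 ((1/α) * (0:ℝ) ^ α)) :=
      Tendsto.const_mul _ (((Real.continuousAt_rpow_const 0 α (Or.inr hαpos.le)).tendsto).comp hs)
    rw [Real.zero_rpow hαpos.ne', mul_zero] at h2
    exact h2.congr fun ν => (hcs ν).symm
  obtain ⟨r, hr⟩ := EReal.canLift.prf (phiFun g0 h μ G x0) ⟨hx0dom, hphibot x0⟩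
  have key : ∀ ν, (⨅ p, rockApprox g0 h (μs ν) (Gs ν) α (lam ν) p) ≤ ((r + c ν : ℝ) : EReal) := by
    intro ν
    refine le_trans (iInf_le _ (u ν, x0)) ?_
    have harg : u ν + EV (μs ν) (Gs ν) x0 = EV μ (Gs ν) x0 := by
      funext i; simp only [hu, Pi.add_apply]; ring
    calc rockApprox g0 h (μs ν) (Gs ν) α (lam ν) (u ν, x0)
        = g0 x0 + h (EV μ (Gs ν) x0) + ((c ν : ℝ) : EReal) := by
          simp only [rockApprox]; rw [harg]
      _ ≤ g0 x0 + h (EV μ G x0) + ((c ν : ℝ) : EReal) :=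
          add_le_add_left (add_le_add_right (hhmono _ _ (fun i => hEVle ν i)) _) _
      _ = (r : EReal) + (c ν : EReal) := by rw [hr]; rfl
      _ = ((r + c ν : ℝ) : EReal) := (EReal.coe_add r (c ν)).symm
  have hlim : Tendsto (fun ν => ((r + c ν : ℝ) : EReal)) atTop (𝓝 (r : EReal)) :=
    EReal.tendsto_coe.mpr (by simpa using (tendsto_const_nhds.add hc0))
  calc limsup (fun ν => ⨅ p, rockApprox g0 h (μs ν) (Gs ν) α (lam ν) p) atTop
      ≤ limsup (fun ν => ((r + c ν : ℝ) : EReal)) atTop :=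
        limsup_le_limsup (Eventually.of_forall key)
    _ = (r : EReal) := hlim.limsup_eq
    _ ≤ ⨅ p, rock g0 h μ G p := by rw [hr, hx0min, goal2]


end
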